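/- For every finite graph G and every injective function f: V → ℝ, the Poincaré–Hopf indices i_f(v) = 1 - χ(S⁻_f(v)) sum to the Euler characteristic χ(G), where S⁻_f(v) is the subgraph induced by the neighbors w of v with f(w) < f(v) and χ denotes the alternating sum of clique numbers χ(G) = Σ_k (-1)^k f_k(G) with f_k the number of (k+1)-cliques. -/
import Mathlib
set_option linter.unusedSectionVars false

open Finset

section aux
variable {V : Type*} [Fintype V] [DecidableEq V] (G : SimpleGraph V) [DecidableRel G.Adj]

lemma ncard_eq_filter (n : ℕ) (s : Set V)
    [DecidablePred (fun t : Finset V => ↑t ⊆ s)] :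
    (G.cliqueSet n ∩ {t : Finset V | ↑t ⊆ s}).ncard
      = ((G.cliqueFinset n).filter (fun t => ↑t ⊆ s)).card := by
  rw [← Set.ncard_coe_finset]
  congr 1
  ext t
  simp [SimpleGraph.mem_cliqueSet_iff, SimpleGraph.mem_cliqueFinset_iff]

variable [Nonempty V] (f : V → ℝ)

/-- Vertex of `t` with maximal `f`-value (junk if `t = ∅`). -/
noncomputable def mv (t : Finset V) : V :=
  if h : t.Nonempty then (t.exists_max_image f h).choose else Classical.arbitrary V

lemma mv_mem {t : Finset V} (h : t.Nonempty) : mv f t ∈ t := by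
  rw [mv, dif_pos h]
  exact (t.exists_max_image f h).choose_spec.1

lemma le_mv {t : Finset V} (h : t.Nonempty) {w : V} (hw : w ∈ t) : f w ≤ f (mv f t) := by
  rw [mv, dif_pos h]
  exact (t.exists_max_image f h).choose_spec.2 w hw

/-- The key fiberwise bijection: `(k+1)`-cliques with max vertex `v`
correspond to `k`-cliques inside `S⁻_f(v)`. -/
lemma fiber_card (hf : Function.Injective f) (v : V) (k : ℕ)
    [DecidablePred (fun t : Finset V => ↑t ⊆ {w | G.Adj v w ∧ f w < f v})] :
    ((G.cliqueFinset (k+1)).filter (fun t => mv f t = v)).card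
      = ((G.cliqueFinset k).filter (fun t => ↑t ⊆ {w | G.Adj v w ∧ f w < f v})).card := by
  apply Finset.card_bij (fun t _ => t.erase v)
  · intro t ht
    simp only [mem_filter, SimpleGraph.mem_cliqueFinset_iff] at ht ⊢
    obtain ⟨hcl, hmv⟩ := ht
    have hne : t.Nonempty := Finset.card_pos.mp (by rw [hcl.card_eq]; omega)
    have hvt : v ∈ t := hmv ▸ mv_mem f hne
    refine ⟨⟨hcl.1.subset (Finset.erase_subset _ _), ?_⟩, ?_⟩
    · rw [Finset.card_erase_of_mem hvt, hcl.card_eq]; omega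
    · intro w hw
      simp only [Finset.coe_erase, Set.mem_diff, Finset.mem_coe, Set.mem_singleton_iff] at hw
      obtain ⟨hwt, hwv⟩ := hw
      have hadj : G.Adj v w := hcl.1 hvt hwt (Ne.symm hwv)
      refine ⟨hadj, lt_of_le_of_ne (hmv ▸ le_mv f hne hwt) (fun h => hwv (hf h))⟩
  · intro t₁ h₁ t₂ h₂ he
    simp only [mem_filter, SimpleGraph.mem_cliqueFinset_iff] at h₁ h₂
    have hne₁ : t₁.Nonempty := Finset.card_pos.mp (by rw [h₁.1.card_eq]; omega)
    have hne₂ : t₂.Nonempty := Finset.card_pos.mp (by rw [h₂.1.card_eq]; omega)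
    have hv₁ : v ∈ t₁ := h₁.2 ▸ mv_mem f hne₁
    have hv₂ : v ∈ t₂ := h₂.2 ▸ mv_mem f hne₂
    rw [← Finset.insert_erase hv₁, ← Finset.insert_erase hv₂, he]
  · intro s hs
    simp only [mem_filter, SimpleGraph.mem_cliqueFinset_iff] at hs
    obtain ⟨hcl, hsub⟩ := hs
    have hvs : v ∉ s := fun h => (hsub h).1.ne rfl
    have hclq : G.IsNClique (k+1) (insert v s) := by
      constructor
      · intro a ha b hb hab
        simp only [Finset.coe_insert, Set.mem_insert_iff, Finset.mem_coe] at ha hb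
        rcases ha with rfl | ha <;> rcases hb with rfl | hb
        · exact absurd rfl hab
        · exact (hsub hb).1
        · exact (hsub ha).1.symm
        · exact hcl.1 ha hb hab
      · rw [Finset.card_insert_of_notMem hvs, hcl.card_eq]
    have hmv : mv f (insert v s) = v := by
      have hne : (insert v s).Nonempty := Finset.insert_nonempty _ _
      have hm := mv_mem f hne
      rcases Finset.mem_insert.mp hm with h | h
      · exact h
      · exact absurd (le_mv f hne (Finset.mem_insert_self v s)) (not_le.mpr (hsub h).2)
    refine ⟨insert v s, ?_, ?_⟩
    · simp only [mem_filter, SimpleGraph.mem_cliqueFinset_iff]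
      exact ⟨hclq, hmv⟩
    · rw [Finset.erase_insert hvs]

/-- Partition of all `(k+1)`-cliques by their maximal vertex. -/
lemma clique_partition (hf : Function.Injective f) (k : ℕ)
    [∀ v : V, DecidablePred (fun t : Finset V => ↑t ⊆ {w | G.Adj v w ∧ f w < f v})] :
    (G.cliqueFinset (k+1)).card
      = ∑ v : V, ((G.cliqueFinset k).filter
          (fun t => ↑t ⊆ {w | G.Adj v w ∧ f w < f v})).card := by
  rw [Finset.card_eq_sum_card_fiberwise (f := mv f) (t := Finset.univ)
    (fun t _ => Finset.mem_univ _)]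
  exact Finset.sum_congr rfl fun v _ => fiber_card G f hf v k

end aux

noncomputable def eulerCharOn {V : Type*} [Fintype V] (G : SimpleGraph V)
    (s : Set V) : ℤ :=
  ∑ k ∈ Finset.range (Fintype.card V + 1),
    (-1 : ℤ) ^ k * ((G.cliqueSet (k + 1) ∩ {t : Finset V | ↑t ⊆ s}).ncard : ℤ)

/-- Poincaré–Hopf: for every finite graph `G` and every injective
`f : V → ℝ`, the indices `i_f(v) = 1 - χ(S⁻_f(v))` sum to the Euler
characteristic of `G`, where `S⁻_f(v)` is the subgraph induced on the neighbors
`w` of `v` with `f(w) < f(v)`. -/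
theorem poincare_hopf {V : Type*} [Fintype V] (G : SimpleGraph V)
    (f : V → ℝ) (hf : Function.Injective f) :
    ∑ v : V, (1 - eulerCharOn G {w | G.Adj v w ∧ f w < f v}) =
      eulerCharOn G Set.univ := by
  classical
  cases isEmpty_or_nonempty V with
  | inl h =>
    have : ∀ k, G.cliqueSet (k+1) ∩ {t : Finset V | (↑t : Set V) ⊆ Set.univ} = ∅ := by
      intro k
      ext t
      simp only [Set.mem_inter_iff, SimpleGraph.mem_cliqueSet_iff, Set.mem_empty_iff_false,
        iff_false, not_and]
      intro hcl
      have h1 := hcl.card_eq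
      have h2 : t = ∅ := Finset.eq_empty_of_isEmpty t
      rw [h2] at h1
      simp at h1
    simp [eulerCharOn, this, Set.range_eq_empty]
  | inr h =>
    set N := Fintype.card V with hN
    set B : V → ℕ → ℕ := fun v k => ((G.cliqueFinset k).filter
      (fun t => ↑t ⊆ {w | G.Adj v w ∧ f w < f v})).card with hB
    -- B v 0 = 1
    have hB0 : ∀ v, B v 0 = 1 := by
      intro v
      rw [hB]
      simp only
      rw [Finset.card_eq_one]
      refine ⟨∅, ?_⟩
      ext t
      simp only [SimpleGraph.mem_cliqueFinset_iff, SimpleGraph.isNClique_iff,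
        Finset.card_eq_zero, Finset.mem_filter, Finset.mem_singleton]
      constructor
      · rintro ⟨⟨-, rfl⟩, -⟩; rfl
      · rintro rfl
        refine ⟨⟨by simp, rfl⟩, by simp⟩
    -- B v (N+1) = 0
    have hBtop : ∀ v, B v (N+1) = 0 := by
      intro v
      rw [hB]
      simp only [Finset.card_eq_zero, Finset.filter_eq_empty_iff]
      intro t ht hsub
      rw [SimpleGraph.mem_cliqueFinset_iff] at ht
      have h1 : t.card ≤ N := Finset.card_le_univ t
      rw [ht.card_eq] at h1
      omega
    -- eulerCharOn in terms of B
    have hEC : ∀ v, eulerCharOn G {w | G.Adj v w ∧ f w < f v}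
        = ∑ k ∈ Finset.range (N + 1), (-1 : ℤ) ^ k * (B v (k+1) : ℤ) := by
      intro v
      unfold eulerCharOn
      refine Finset.sum_congr rfl fun k _ => ?_
      rw [ncard_eq_filter]
    have hRHS : eulerCharOn G Set.univ
        = ∑ k ∈ Finset.range (N + 1), (-1 : ℤ) ^ k *
            ((G.cliqueFinset (k+1)).card : ℤ) := by
      unfold eulerCharOn
      refine Finset.sum_congr rfl fun k _ => ?_
      rw [ncard_eq_filter]
      congr 2
      rw [Finset.filter_true_of_mem fun t _ => Set.subset_univ _]
    rw [hRHS]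
    have hpart : ∀ k, ((G.cliqueFinset (k+1)).card : ℤ) = ∑ v : V, (B v k : ℤ) := by
      intro k
      rw [clique_partition G f hf k]
      push_cast
      rfl
    calc ∑ v : V, (1 - eulerCharOn G {w | G.Adj v w ∧ f w < f v})
        = ∑ v : V, ∑ k ∈ Finset.range (N + 1), (-1 : ℤ) ^ k * (B v k : ℤ) := by
          refine Finset.sum_congr rfl fun v _ => ?_
          rw [hEC v]
          rw [Finset.sum_range_succ' (fun k => (-1 : ℤ) ^ k * (B v k : ℤ)) N]
          rw [Finset.sum_range_succ (fun k => (-1 : ℤ) ^ k * (B v (k+1) : ℤ)) N]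
          simp only [hB0, hBtop, pow_zero, Nat.cast_one, Nat.cast_zero, mul_one,
            mul_zero, add_zero]
          have hc : ∀ k ∈ Finset.range N, (-1 : ℤ)^(k+1) * (B v (k+1) : ℤ)
              = -((-1 : ℤ)^k * (B v (k+1) : ℤ)) := fun k _ => by ring
          rw [Finset.sum_congr rfl hc, Finset.sum_neg_distrib]
          ring
      _ = ∑ k ∈ Finset.range (N + 1), (-1 : ℤ) ^ k * ((G.cliqueFinset (k+1)).card : ℤ) := by
          rw [Finset.sum_comm]
          refine Finset.sum_congr rfl fun k _ => ?_
          rw [hpart k, Finset.mul_sum]
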